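/- For every κ ≥ 1 there exist positive constants c₁ and c₂ (depending only on κ) such that the following holds: for every L > 0, μ = L/κ, every f ∈ S_{μ,L} with minimizer x⋆ and minimum f⋆, every x₀, and every speed-restarted trajectory X^{sr} starting from x₀, one has f(X^{sr}(t)) − f⋆ ≤ (c₁ L ‖x₀ − x⋆‖²/2) · e^{−c₂ t √L} for all t ≥ 0. -/

import Mathlib

open Set Filter Topology

noncomputable section

abbrev E (n : ℕ) := EuclideanSpace ℝ (Fin n)

def MemFL (n : ℕ) (L : ℝ) (f : E n → ℝ) : Prop :=
  ConvexOn ℝ Set.univ f ∧ ContDiff ℝ 1 f ∧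
    ∀ x y, ‖gradient f x - gradient f y‖ ≤ L * ‖x - y‖

/-- The class `S_{μ,L}`: members of `F_L` such that `f(x) - μ‖x‖²/2` is convex. -/
def MemS (n : ℕ) (μ L : ℝ) (f : E n → ℝ) : Prop :=
  MemFL n L f ∧ ConvexOn ℝ Set.univ (fun x => f x - μ / 2 * ‖x‖ ^ 2)

def NesterovSol (n : ℕ) (f : E n → ℝ) (x0 : E n) (X : ℝ → E n) : Prop :=
  X 0 = x0 ∧
  ContDiffOn ℝ 1 X (Set.Ici 0) ∧
  ContDiffOn ℝ 2 X (Set.Ioi 0) ∧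
  derivWithin X (Set.Ici 0) 0 = 0 ∧
  ∀ t > (0:ℝ), deriv (deriv X) t + (3 / t) • deriv X t + gradient f (X t) = 0

/-- The speed restarting time of a trajectory `X`:
`T = sup { t > 0 : ∀ u ∈ (0,t), d/du ‖Ẋ(u)‖² > 0 }`. -/
def SpeedRestartTime (n : ℕ) (X : ℝ → E n) : ℝ :=
  sSup {t : ℝ | 0 < t ∧ ∀ u ∈ Set.Ioo (0:ℝ) t, 0 < deriv (fun v => ‖deriv X v‖ ^ 2) u}

/-- The speed-restarted trajectory from `x₀`, with restart times `τ 0 = 0`,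
`τ(i+1) = τ i + T(X^{sr}(τ i); f)`; on each interval between restarts, the shifted curve is
the Nesterov ODE solution started at the current point with zero velocity. -/
def SpeedRestarted (n : ℕ) (f : E n → ℝ) (x0 : E n) (Xsr : ℝ → E n) (τ : ℕ → ℝ) : Prop :=
  τ 0 = 0 ∧ Xsr 0 = x0 ∧ StrictMono τ ∧ Tendsto τ atTop atTop ∧
  ∀ i : ℕ, ∃ X : ℝ → E n,
    NesterovSol n f (Xsr (τ i)) X ∧
    τ (i + 1) = τ i + SpeedRestartTime n X ∧
    ∀ u : ℝ, 0 ≤ u → u ≤ τ (i + 1) - τ i → Xsr (τ i + u) = X u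

/-!
Along a Nesterov trajectory the energy `f(X) + ‖Ẋ‖²/2` decreases at rate `(3/t)‖Ẋ‖²`. Writing
`d/dt (t³ Ẋ) = -t³ ∇f(X)` and using the `L`-Lipschitz gradient, on `[0, 1/(2√L)]` the trajectory
stays close to `X(t) ≈ x₀ - (t²/8) ∇f(x₀)`, so the speed increases there and reaches
`‖Ẋ‖² ≳ ‖∇f(x₀)‖²/L ≳ (μ/L) (f(x₀) - f⋆)` (Polyak–Łojasiewicz). While the speed keeps increasing,
`f(X)` decreases and `E(t) + 3‖Ẋ(t₁)‖² log t` is antitone, which bounds the restart time by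
`e^{O(κ)}/√L`. Hence each restart interval has length between `1/(2√L)` and `e^{O(κ)}/√L` and
multiplies `f - f⋆` by at most `1 - 1/(100κ)`, while `f(x₀) - f⋆ ≤ L‖x₀ - x⋆‖²/2` by the
descent lemma.
-/

open InnerProductSpace
open scoped RealInnerProductSpace

section InnerProductSpace

variable {F : Type*} [NormedAddCommGroup F] [InnerProductSpace ℝ F] [CompleteSpace F]
  {f : F → ℝ} {x : F}

theorem HasGradientAt.comp_hasDerivAt {g : F} {X : ℝ → F} {V : F} {t : ℝ}
    (hf : HasGradientAt f g (X t)) (hX : HasDerivAt X V t) :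
    HasDerivAt (fun s => f (X s)) ⟪g, V⟫ t := by
  refine ((hasGradientAt_iff_hasFDerivAt.1 hf).comp_hasDerivAt t hX).congr_deriv ?_
  simp

theorem hasGradientAt_mul_norm_sq (c : ℝ) (x : F) :
    HasGradientAt (fun y : F => c / 2 * ‖y‖ ^ 2) (c • x) x := by
  rw [hasGradientAt_iff_hasFDerivAt]
  refine ((hasStrictFDerivAt_norm_sq x).hasFDerivAt.const_mul (c / 2)).congr_fderiv ?_
  ext v
  simp only [smul_apply, coe_innerSL_apply, nsmul_eq_mul, Nat.cast_ofNat,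
    smul_eq_mul, map_smul, toDual_apply_apply]
  ring

theorem ConvexOn.add_inner_gradient_le (hf : ConvexOn ℝ univ f) (hd : DifferentiableAt ℝ f x)
    (y : F) : f x + ⟪gradient f x, y - x⟫ ≤ f y := by
  set g : ℝ → ℝ := fun s => f (x + s • (y - x))
  have hg : ConvexOn ℝ univ g := by
    simpa [g, Function.comp_def, AffineMap.lineMap_apply_module', add_comm] using
      hf.comp_affineMap (AffineMap.lineMap x y)
  have hline : HasDerivAt (fun s : ℝ => x + s • (y - x)) (y - x) 0 := by
    simpa using ((hasDerivAt_id (0 : ℝ)).smul_const (y - x)).const_add x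
  have hg' : HasDerivAt g ⟪gradient f x, y - x⟫ 0 :=
    HasGradientAt.comp_hasDerivAt (by simpa using hd.hasGradientAt) hline
  have := hg.le_slope_of_hasDerivAt (mem_univ 0) (mem_univ 1) one_pos hg'
  simp only [slope_def_field, g, zero_smul, add_zero, one_smul, add_sub_cancel, sub_zero,
    div_one] at this
  linarith

theorem StrongConvexOn.add_inner_gradient_add_le {μ : ℝ} (hf : StrongConvexOn univ μ f)
    (hd : DifferentiableAt ℝ f x) (y : F) :
    f x + ⟪gradient f x, y - x⟫ + μ / 2 * ‖y - x‖ ^ 2 ≤ f y := by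
  have hh : HasGradientAt (fun z => f z - μ / 2 * ‖z‖ ^ 2) (gradient f x - μ • x) x := by
    rw [hasGradientAt_iff_hasFDerivAt, map_sub]
    exact hd.hasGradientAt.hasFDerivAt.sub (hasGradientAt_mul_norm_sq μ x).hasFDerivAt
  have := (strongConvexOn_iff_convex.1 hf).add_inner_gradient_le hh.differentiableAt y
  rw [hh.gradient] at this
  rw [norm_sub_sq_real, real_inner_comm x y]
  simp only [inner_sub_left, inner_sub_right, real_inner_smul_left,
    real_inner_self_eq_norm_sq] at this ⊢
  linarith

theorem StrongConvexOn.mul_sub_le_norm_gradient_sq {μ : ℝ} {xstar : F}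
    (hf : StrongConvexOn univ μ f) (hd : DifferentiableAt ℝ f x) (hmin : IsMinOn f univ xstar) :
    2 * μ * (f x - f xstar) ≤ ‖gradient f x‖ ^ 2 := by
  have hgap : f xstar ≤ f x := hmin (mem_univ x)
  have hsc := hf.add_inner_gradient_add_le hd xstar
  have hcs : -(‖gradient f x‖ * ‖xstar - x‖) ≤ ⟪gradient f x, xstar - x⟫ :=
    neg_le_of_abs_le (abs_real_inner_le_norm _ _)
  rcases le_or_gt μ 0 with hμ | hμ
  · nlinarith [sq_nonneg ‖gradient f x‖]
  · nlinarith [sq_nonneg (‖gradient f x‖ - μ * ‖xstar - x‖)]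

theorem le_add_inner_gradient_add_of_lipschitz {L : ℝ} (hf : Differentiable ℝ f)
    (hlip : ∀ a b, ‖gradient f a - gradient f b‖ ≤ L * ‖a - b‖) (x y : F) :
    f y ≤ f x + ⟪gradient f x, y - x⟫ + L / 2 * ‖y - x‖ ^ 2 := by
  set d := y - x
  set φ : ℝ → ℝ := fun s => f (x + s • d) - s * ⟪gradient f x, d⟫ - s ^ 2 * (L / 2 * ‖d‖ ^ 2)
  have hφ : ∀ s, HasDerivAt φ
      (⟪gradient f (x + s • d) - gradient f x, d⟫ - s * (L * ‖d‖ ^ 2)) s := by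
    intro s
    have hline : HasDerivAt (fun s : ℝ => x + s • d) d s := by
      simpa using ((hasDerivAt_id s).smul_const d).const_add x
    refine ((((hf _).hasGradientAt.comp_hasDerivAt hline).sub
      ((hasDerivAt_id s).mul_const ⟪gradient f x, d⟫)).sub
      ((hasDerivAt_pow 2 s).mul_const (L / 2 * ‖d‖ ^ 2))).congr_deriv ?_
    rw [inner_sub_left]
    push_cast
    ring
  have hanti : AntitoneOn φ (Icc 0 1) := by
    refine antitoneOn_of_hasDerivWithinAt_nonpos (convex_Icc 0 1)
      (fun s _ => (hφ s).continuousAt.continuousWithinAt)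
      (fun s _ => (hφ s).hasDerivWithinAt) fun s hs => ?_
    rw [interior_Icc] at hs
    have hdist : ‖x + s • d - x‖ = s * ‖d‖ := by
      rw [add_sub_cancel_left, norm_smul, Real.norm_of_nonneg hs.1.le]
    calc ⟪gradient f (x + s • d) - gradient f x, d⟫ - s * (L * ‖d‖ ^ 2)
        ≤ ‖gradient f (x + s • d) - gradient f x‖ * ‖d‖ - s * (L * ‖d‖ ^ 2) := by
          gcongr; exact real_inner_le_norm _ _
      _ ≤ L * ‖x + s • d - x‖ * ‖d‖ - s * (L * ‖d‖ ^ 2) := by gcongr; exact hlip _ _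
      _ = 0 := by rw [hdist]; ring
  have := hanti (left_mem_Icc.2 zero_le_one) (right_mem_Icc.2 zero_le_one) zero_le_one
  simp only [φ, d, zero_smul, add_zero, one_smul, add_sub_cancel, zero_mul, sub_zero, one_mul,
    ne_eq, OfNat.ofNat_ne_zero, not_false_eq_true, zero_pow, one_pow] at this
  linarith

theorem IsMinOn.sub_le_of_lipschitz_gradient {L : ℝ} {xstar : F} (hmin : IsMinOn f univ xstar)
    (hf : Differentiable ℝ f) (hlip : ∀ a b, ‖gradient f a - gradient f b‖ ≤ L * ‖a - b‖)
    (y : F) : f y - f xstar ≤ L / 2 * ‖y - xstar‖ ^ 2 := by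
  have := le_add_inner_gradient_add_of_lipschitz hf hlip xstar y
  rw [show gradient f xstar = 0 by simp [gradient, (hmin.isLocalMin univ_mem).fderiv_eq_zero],
    inner_zero_left, add_zero] at this
  linarith

end InnerProductSpace

theorem inner_pos_of_norm_sub_add_norm_sub_le {F : Type*} [NormedAddCommGroup F]
    [InnerProductSpace ℝ F] {a u v : F} (ha : a ≠ 0) (h : 2 * (‖u - a‖ + ‖v - a‖) ≤ ‖a‖) :
    0 < ⟪u, v⟫ := by
  have hexp : ⟪u, v⟫ = ‖a‖ ^ 2 + ⟪a, u - a⟫ + ⟪a, v - a⟫ + ⟪u - a, v - a⟫ := by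
    simp only [inner_sub_left, inner_sub_right, real_inner_self_eq_norm_sq, real_inner_comm a u]
    ring
  have h1 := neg_le_of_abs_le (abs_real_inner_le_norm a (u - a))
  have h2 := neg_le_of_abs_le (abs_real_inner_le_norm a (v - a))
  have h3 := neg_le_of_abs_le (abs_real_inner_le_norm (u - a) (v - a))
  have ha' := norm_pos_iff.2 ha
  nlinarith [norm_nonneg (u - a), norm_nonneg (v - a)]

section NormedSpace

variable {G : Type*} [NormedAddCommGroup G] [NormedSpace ℝ G]

theorem norm_le_of_norm_deriv_le_pow {φ φ' : ℝ → G} {b c : ℝ} {k : ℕ}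
    (hφ : ContinuousOn φ (Icc 0 b)) (hφ0 : φ 0 = 0)
    (hφ' : ∀ u ∈ Ico 0 b, HasDerivWithinAt φ (φ' u) (Ici u) u)
    (hbound : ∀ u ∈ Ico 0 b, ‖φ' u‖ ≤ c * u ^ k) {s : ℝ} (hs : s ∈ Icc 0 b) :
    ‖φ s‖ ≤ c * s ^ (k + 1) / (k + 1) := by
  have hB : ∀ u : ℝ, HasDerivAt (fun v => c * v ^ (k + 1) / (k + 1)) (c * u ^ k) u := by
    intro u
    refine ((hasDerivAt_pow (k + 1) u).const_mul c |>.div_const _).congr_deriv ?_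
    push_cast
    field_simp
  exact image_norm_le_of_norm_deriv_right_le_deriv_boundary hφ hφ' (by simp [hφ0]) hB hbound hs

theorem norm_le_of_norm_pow_smul_le {v : G} {s r : ℝ} {k : ℕ} (hs : 0 < s)
    (h : ‖s ^ k • v‖ ≤ s ^ k * r) : ‖v‖ ≤ r := by
  rw [norm_smul, norm_pow, Real.norm_of_nonneg hs.le] at h
  exact le_of_mul_le_mul_left h (pow_pos hs k)

end NormedSpace

theorem mul_sq_one_div_two_mul_sqrt {L : ℝ} (hL : 0 < L) : L * (1 / (2 * √L)) ^ 2 = 1 / 4 := by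
  rw [div_pow, mul_pow, Real.sq_sqrt hL.le]
  field_simp
  norm_num

theorem MemS.gradient_ne_zero {n : ℕ} {μ L : ℝ} {f : E n → ℝ} {x xstar : E n}
    (hfS : MemS n μ L f) (hμ : 0 < μ) (hmin : IsMinOn f univ xstar) (hx : f xstar < f x) :
    gradient f x ≠ 0 := by
  intro hG
  have := (strongConvexOn_iff_convex.2 hfS.2).mul_sub_le_norm_gradient_sq
    (hfS.1.2.1.differentiable one_ne_zero x) hmin
  rw [hG, norm_zero] at this
  nlinarith

section SpeedRestartTime

variable {n : ℕ} {X : ℝ → E n}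

theorem deriv_sq_norm_deriv_pos_of_lt_speedRestartTime {u : ℝ}
    (hu : u ∈ Ioo 0 (SpeedRestartTime n X)) :
    0 < deriv (fun v => ‖deriv X v‖ ^ 2) u := by
  set S := {t : ℝ | 0 < t ∧ ∀ u ∈ Ioo 0 t, 0 < deriv (fun v => ‖deriv X v‖ ^ 2) u}
  rcases S.eq_empty_or_nonempty with hS | hS
  · have : SpeedRestartTime n X = 0 := by
      change sSup S = 0
      rw [hS, Real.sSup_empty]
    exact absurd (hu.1.trans hu.2) (by simp [this])
  · obtain ⟨t, ht, hut⟩ := exists_lt_of_lt_csSup hS hu.2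
    exact ht.2 u ⟨hu.1, hut⟩

theorem speedRestartTime_mem_Icc {a B : ℝ} (ha : 0 < a)
    (hinc : ∀ u ∈ Ioo 0 a, 0 < deriv (fun v => ‖deriv X v‖ ^ 2) u)
    (hstop : ∀ b > B, ∃ u ∈ Ioo 0 b, deriv (fun v => ‖deriv X v‖ ^ 2) u ≤ 0) :
    SpeedRestartTime n X ∈ Icc a B := by
  have hle : ∀ b ∈ {t : ℝ | 0 < t ∧ ∀ u ∈ Ioo 0 t, 0 < deriv (fun v => ‖deriv X v‖ ^ 2) u},
      b ≤ B := fun b hb => by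
    by_contra! hbB
    obtain ⟨u, hu, hu'⟩ := hstop b hbB
    exact hu'.not_gt (hb.2 u hu)
  exact ⟨le_csSup ⟨B, hle⟩ ⟨ha, hinc⟩, csSup_le ⟨a, ha, hinc⟩ hle⟩

end SpeedRestartTime

def nesterovEnergy {n : ℕ} (f : E n → ℝ) (X : ℝ → E n) (t : ℝ) : ℝ :=
  f (X t) + ‖deriv X t‖ ^ 2 / 2

namespace NesterovSol

variable {n : ℕ} {f : E n → ℝ} {x xstar : E n} {X : ℝ → E n} {t s b μ L : ℝ}

theorem deriv_zero (hsol : NesterovSol n f x X) : deriv X 0 = 0 := by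
  by_cases hd : DifferentiableAt ℝ X 0
  · rw [← hd.derivWithin (uniqueDiffOn_Ici (0 : ℝ) 0 self_mem_Ici)]
    exact hsol.2.2.2.1
  · exact deriv_zero_of_not_differentiableAt hd

theorem derivWithin_eq (hsol : NesterovSol n f x X) (ht : 0 ≤ t) :
    derivWithin X (Ici 0) t = deriv X t := by
  rcases ht.eq_or_lt with rfl | ht
  · rw [hsol.2.2.2.1, hsol.deriv_zero]
  · exact derivWithin_of_mem_nhds (Ici_mem_nhds ht)

theorem hasDerivWithinAt (hsol : NesterovSol n f x X) (ht : 0 ≤ t) :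
    HasDerivWithinAt X (deriv X t) (Ici t) t := by
  have := ((hsol.2.1.differentiableOn one_ne_zero) t ht).hasDerivWithinAt
  rw [hsol.derivWithin_eq ht] at this
  exact this.mono (Ici_subset_Ici.2 ht)

theorem hasDerivAt (hsol : NesterovSol n f x X) (ht : 0 < t) :
    HasDerivAt X (deriv X t) t :=
  ((hsol.2.2.1.differentiableOn two_ne_zero).differentiableAt (Ioi_mem_nhds ht)).hasDerivAt

theorem continuousOn_deriv (hsol : NesterovSol n f x X) : ContinuousOn (deriv X) (Ici 0) :=
  (hsol.2.1.continuousOn_derivWithin (uniqueDiffOn_Ici 0) le_rfl).congr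
    fun _ ht => (hsol.derivWithin_eq ht).symm

theorem hasDerivAt_deriv (hsol : NesterovSol n f x X) (ht : 0 < t) :
    HasDerivAt (deriv X) (deriv (deriv X) t) t :=
  (((hsol.2.2.1.deriv_of_isOpen isOpen_Ioi (by norm_num)).differentiableOn one_ne_zero)
    |>.differentiableAt (Ioi_mem_nhds ht)).hasDerivAt

theorem deriv_deriv (hsol : NesterovSol n f x X) (ht : 0 < t) :
    deriv (deriv X) t = -((3 / t) • deriv X t) - gradient f (X t) := by
  linear_combination (norm := module) hsol.2.2.2.2 t ht

theorem hasDerivAt_sq_norm_deriv (hsol : NesterovSol n f x X) (ht : 0 < t) :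
    HasDerivAt (fun v => ‖deriv X v‖ ^ 2) (2 * ⟪deriv X t, deriv (deriv X) t⟫) t :=
  (hsol.hasDerivAt_deriv ht).norm_sq

theorem hasDerivAt_comp (hsol : NesterovSol n f x X) (hf : Differentiable ℝ f) (ht : 0 < t) :
    HasDerivAt (fun v => f (X v)) ⟪gradient f (X t), deriv X t⟫ t :=
  (hf _).hasGradientAt.comp_hasDerivAt (hsol.hasDerivAt ht)

theorem hasDerivWithinAt_cube_smul_deriv (hsol : NesterovSol n f x X) (ht : 0 ≤ t) :
    HasDerivWithinAt (fun u : ℝ => u ^ 3 • deriv X u) (-(t ^ 3 • gradient f (X t))) (Ici t) t := by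
  rcases ht.eq_or_lt with rfl | ht
  -- at `0`, the slope `u² Ẋ(u)` tends to `0` because `Ẋ` is continuous with `Ẋ(0) = 0`
  · refine HasDerivWithinAt.Ici_of_Ioi ?_
    rw [hasDerivWithinAt_iff_tendsto_slope' self_notMem_Ioi]
    have hV : Tendsto (deriv X) (𝓝[>] 0) (𝓝 0) := by
      simpa [hsol.deriv_zero] using (hsol.continuousOn_deriv 0 self_mem_Ici).tendsto.mono_left
        (nhdsWithin_mono _ Ioi_subset_Ici_self)
    have hsq : Tendsto (fun u : ℝ => u ^ 2) (𝓝[>] 0) (𝓝 0) := by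
      simpa using ((continuous_pow 2).tendsto (0 : ℝ)).mono_left nhdsWithin_le_nhds
    simp only [ne_eq, OfNat.ofNat_ne_zero, not_false_eq_true, zero_pow, zero_smul, neg_zero]
    refine (zero_smul ℝ (0 : E n) ▸ hsq.smul hV).congr' ?_
    filter_upwards [self_mem_nhdsWithin] with u hu
    have hu : u ≠ 0 := ne_of_gt hu
    simp only [slope_def_module, sub_zero, zero_pow three_ne_zero, zero_smul, smul_smul]
    congr 1
    field_simp
  · refine ((hasDerivAt_pow 3 t).smul (hsol.hasDerivAt_deriv ht)).hasDerivWithinAt.congr_deriv ?_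
    rw [hsol.deriv_deriv ht, smul_sub, smul_neg, smul_smul]
    field_simp
    module

theorem hasDerivAt_energy (hsol : NesterovSol n f x X) (hf : Differentiable ℝ f) (ht : 0 < t) :
    HasDerivAt (nesterovEnergy f X) (-(3 / t) * ‖deriv X t‖ ^ 2) t := by
  refine ((hsol.hasDerivAt_comp hf ht).add
    ((hsol.hasDerivAt_sq_norm_deriv ht).div_const 2)).congr_deriv ?_
  rw [hsol.deriv_deriv ht, inner_sub_right, inner_neg_right, real_inner_smul_right,
    real_inner_self_eq_norm_sq, real_inner_comm]
  ring

theorem energy_antitoneOn (hsol : NesterovSol n f x X) (hf : Differentiable ℝ f) :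
    AntitoneOn (nesterovEnergy f X) (Ici 0) := by
  have hcont : ContinuousOn (nesterovEnergy f X) (Ici 0) :=
    (hf.continuous.comp_continuousOn hsol.2.1.continuousOn).add
      ((hsol.continuousOn_deriv.norm.pow 2).div_const 2)
  refine antitoneOn_of_hasDerivWithinAt_nonpos (f' := fun t => -(3 / t) * ‖deriv X t‖ ^ 2)
    (convex_Ici 0) hcont (fun t ht => ?_) fun t ht => ?_ <;> rw [interior_Ici] at ht
  · exact (hsol.hasDerivAt_energy hf ht).hasDerivWithinAt
  · have ht : 0 < t := ht
    rw [neg_mul]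
    exact neg_nonpos.2 (by positivity)

theorem energy_le (hsol : NesterovSol n f x X) (hf : Differentiable ℝ f) (ht : 0 ≤ t) :
    nesterovEnergy f X t ≤ f x := by
  have := hsol.energy_antitoneOn hf self_mem_Ici ht ht
  simpa [nesterovEnergy, hsol.1, hsol.deriv_zero] using this

theorem comp_le (hsol : NesterovSol n f x X) (hf : Differentiable ℝ f) (ht : 0 ≤ t) :
    f (X t) ≤ f x :=
  le_trans (le_add_of_nonneg_right (by positivity)) (hsol.energy_le hf ht)

theorem norm_deriv_le_of_norm_gradient_le (hsol : NesterovSol n f x X) {C : ℝ}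
    (hC : ∀ u ∈ Ico 0 b, ‖gradient f (X u)‖ ≤ C) (hs : s ∈ Icc 0 b) :
    ‖deriv X s‖ ≤ C * s / 4 := by
  rcases hs.1.eq_or_lt with rfl | hs0
  · simp [hsol.deriv_zero]
  have := norm_le_of_norm_deriv_le_pow (c := C) (k := 3)
    (((continuous_pow 3).continuousOn).smul (hsol.continuousOn_deriv.mono Icc_subset_Ici_self))
    (by simp) (fun u hu => hsol.hasDerivWithinAt_cube_smul_deriv hu.1) (fun u hu => ?_) hs
  · refine norm_le_of_norm_pow_smul_le hs0 (this.trans_eq ?_)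
    push_cast
    ring
  · rw [norm_neg, norm_smul, norm_pow, Real.norm_of_nonneg hu.1, mul_comm]
    exact mul_le_mul_of_nonneg_right (hC u hu) (by positivity [hu.1])

theorem norm_sub_le_of_norm_deriv_le (hsol : NesterovSol n f x X) {c : ℝ}
    (hV : ∀ u ∈ Ico 0 b, ‖deriv X u‖ ≤ c * u) (hs : s ∈ Icc 0 b) :
    ‖X s - x‖ ≤ c * s ^ 2 / 2 := by
  have := norm_le_of_norm_deriv_le_pow (φ := fun u => X u - x) (k := 1)
    ((hsol.2.1.continuousOn.mono Icc_subset_Ici_self).sub continuousOn_const)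
    (by simp [hsol.1]) (fun u hu => (hsol.hasDerivWithinAt hu.1).sub_const x)
    (fun u hu => by simpa using hV u hu) hs
  simpa [one_add_one_eq_two] using this

theorem norm_gradient_sub_le (hsol : NesterovSol n f x X) (hL : 0 ≤ L)
    (hlip : ∀ a b, ‖gradient f a - gradient f b‖ ≤ L * ‖a - b‖) (hb : L * b ^ 2 ≤ 1 / 4)
    (hs : s ∈ Icc 0 b) :
    ‖gradient f (X s) - gradient f x‖ ≤ L * ‖gradient f x‖ * s ^ 2 / 4 := by
  have hgrad : Continuous (gradient f) :=
    (LipschitzWith.of_dist_le' fun a b => by simpa [dist_eq_norm] using hlip a b).continuous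
  obtain ⟨u₀, hu₀, hmax⟩ := isCompact_Icc.exists_isMaxOn (nonempty_Icc.2 (hs.1.trans hs.2))
    ((hgrad.comp_continuousOn (hsol.2.1.continuousOn.mono Icc_subset_Ici_self)).norm)
  set C := ‖gradient f (X u₀)‖
  have hX : ∀ s ∈ Icc 0 b, ‖X s - x‖ ≤ C * s ^ 2 / 8 := fun s hs => by
    have := hsol.norm_sub_le_of_norm_deriv_le (c := C / 4) (fun u hu => ?_) hs
    · linarith
    · have := hsol.norm_deriv_le_of_norm_gradient_le (C := C)
        (fun v hv => hmax (Ico_subset_Icc_self hv)) (Ico_subset_Icc_self hu)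
      linarith
  have hLX : ∀ s ∈ Icc 0 b, ‖gradient f (X s) - gradient f x‖ ≤ L * (C * s ^ 2 / 8) :=
    fun s hs => (hlip _ _).trans (mul_le_mul_of_nonneg_left (hX s hs) hL)
  -- `C ≤ ‖∇f x‖ + L C u₀² / 8 ≤ ‖∇f x‖ + C / 32`
  have hC : C ≤ 2 * ‖gradient f x‖ := by
    have h1 := norm_le_insert' (gradient f (X u₀)) (gradient f x)
    have h2 : L * u₀ ^ 2 ≤ 1 / 4 := hb.trans' (by gcongr; exacts [hu₀.1, hu₀.2])
    nlinarith [hLX u₀ hu₀, norm_nonneg (gradient f (X u₀))]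
  calc ‖gradient f (X s) - gradient f x‖ ≤ L * (C * s ^ 2 / 8) := hLX s hs
    _ ≤ L * (2 * ‖gradient f x‖ * s ^ 2 / 8) := by gcongr
    _ = L * ‖gradient f x‖ * s ^ 2 / 4 := by ring

theorem norm_deriv_add_smul_le (hsol : NesterovSol n f x X) {D : ℝ}
    (hD : ∀ u ∈ Ico 0 b, ‖gradient f (X u) - gradient f x‖ ≤ D * u ^ 2) (hs : s ∈ Icc 0 b) :
    ‖deriv X s + (s / 4) • gradient f x‖ ≤ D * s ^ 3 / 6 := by
  rcases hs.1.eq_or_lt with rfl | hs0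
  · simp [hsol.deriv_zero]
  have hquartic : ∀ u : ℝ, HasDerivAt (fun v : ℝ => (v ^ 4 / 4) • gradient f x)
      (u ^ 3 • gradient f x) u := fun u => by
    refine (((hasDerivAt_pow 4 u).div_const 4).smul_const (gradient f x)).congr_deriv ?_
    norm_num
  have := norm_le_of_norm_deriv_le_pow (c := D) (k := 5)
    (φ := fun u => u ^ 3 • deriv X u + (u ^ 4 / 4) • gradient f x)
    ((((continuous_pow 3).continuousOn).smul
      (hsol.continuousOn_deriv.mono Icc_subset_Ici_self)).add (by fun_prop)) (by simp)
    (fun u hu => ((hsol.hasDerivWithinAt_cube_smul_deriv hu.1).add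
      (hquartic u).hasDerivWithinAt)) (fun u hu => ?_) hs
  · refine norm_le_of_norm_pow_smul_le (k := 3) hs0 ((le_of_eq ?_).trans (this.trans_eq ?_))
    · congr 1
      rw [smul_add, smul_smul]
      congr 2
      ring
    · push_cast
      ring
  · rw [neg_add_eq_sub, ← smul_sub, norm_smul, norm_pow, Real.norm_of_nonneg hu.1, norm_sub_rev]
    calc u ^ 3 * ‖gradient f (X u) - gradient f x‖ ≤ u ^ 3 * (D * u ^ 2) := by
          have := hu.1; gcongr; exact hD u hu
      _ = D * u ^ 5 := by ring

theorem short_time_estimates (hsol : NesterovSol n f x X) (hL : 0 ≤ L)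
    (hlip : ∀ a b, ‖gradient f a - gradient f b‖ ≤ L * ‖a - b‖) (hs : 0 ≤ s)
    (hLs : L * s ^ 2 ≤ 1 / 4) :
    ‖gradient f (X s) - gradient f x‖ ≤ ‖gradient f x‖ / 16 ∧
      ‖deriv X s + (s / 4) • gradient f x‖ ≤ ‖gradient f x‖ * s / 96 := by
  have hmem : s ∈ Icc 0 s := ⟨hs, le_rfl⟩
  have hG := norm_nonneg (gradient f x)
  constructor
  · calc _ ≤ L * ‖gradient f x‖ * s ^ 2 / 4 := hsol.norm_gradient_sub_le hL hlip hLs hmem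
      _ = (L * s ^ 2) * ‖gradient f x‖ / 4 := by ring
      _ ≤ 1 / 4 * ‖gradient f x‖ / 4 := by gcongr
      _ = _ := by ring
  · have hD := fun u hu => (hsol.norm_gradient_sub_le hL hlip hLs (Ico_subset_Icc_self hu)).trans_eq
      (mul_div_right_comm _ (u ^ 2) 4)
    calc _ ≤ L * ‖gradient f x‖ / 4 * s ^ 3 / 6 := hsol.norm_deriv_add_smul_le hD hmem
      _ = (L * s ^ 2) * (‖gradient f x‖ * s) / 24 := by ring
      _ ≤ 1 / 4 * (‖gradient f x‖ * s) / 24 := by gcongr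
      _ = _ := by ring

theorem deriv_sq_norm_deriv_pos (hsol : NesterovSol n f x X) (hL : 0 ≤ L)
    (hlip : ∀ a b, ‖gradient f a - gradient f b‖ ≤ L * ‖a - b‖) (hG : gradient f x ≠ 0)
    (hs : 0 < s) (hLs : L * s ^ 2 ≤ 1 / 4) :
    0 < deriv (fun v => ‖deriv X v‖ ^ 2) s := by
  obtain ⟨he, hr⟩ := hsol.short_time_estimates hL hlip hs.le hLs
  set G := gradient f x
  set r := deriv X s + (s / 4) • G
  have hnorm : ‖-((s / 4) • G)‖ = s / 4 * ‖G‖ := by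
    rw [norm_neg, norm_smul, Real.norm_of_nonneg (by positivity)]
  have hacc : s • deriv (deriv X) s - -((s / 4) • G) =
      -((3 : ℝ) • r) - s • (gradient f (X s) - G) := by
    rw [hsol.deriv_deriv hs, smul_sub, smul_neg, smul_smul, mul_div_cancel₀ _ hs.ne']
    module
  -- both `Ẋ(s)` and `s Ẍ(s)` are close to `-(s/4) ∇f(x)`
  have hpos : 0 < ⟪s • deriv (deriv X) s, deriv X s⟫ := by
    have hs4 : s / 4 ≠ 0 := by positivity
    refine inner_pos_of_norm_sub_add_norm_sub_le (neg_ne_zero.2 (smul_ne_zero hs4 hG)) ?_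
    rw [hacc, hnorm, sub_neg_eq_add]
    have h3 : ‖-((3 : ℝ) • r) - s • (gradient f (X s) - G)‖ ≤
        3 * ‖r‖ + s * ‖gradient f (X s) - G‖ := by
      refine (norm_sub_le _ _).trans_eq ?_
      rw [norm_neg, norm_smul, norm_smul, Real.norm_of_nonneg hs.le]
      norm_num
    nlinarith [norm_nonneg G]
  rw [(hsol.hasDerivAt_sq_norm_deriv hs).deriv, real_inner_comm]
  rw [real_inner_smul_left] at hpos
  nlinarith

theorem norm_deriv_ge (hsol : NesterovSol n f x X) (hL : 0 ≤ L)
    (hlip : ∀ a b, ‖gradient f a - gradient f b‖ ≤ L * ‖a - b‖) (hs : 0 ≤ s)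
    (hLs : L * s ^ 2 ≤ 1 / 4) :
    ‖gradient f x‖ * s / 5 ≤ ‖deriv X s‖ := by
  have hr := (hsol.short_time_estimates hL hlip hs hLs).2
  have htri := norm_sub_le (deriv X s + (s / 4) • gradient f x) (deriv X s)
  rw [add_sub_cancel_left, norm_smul, Real.norm_of_nonneg (by positivity)] at htri
  nlinarith [norm_nonneg (gradient f x)]

theorem mul_log_le_energy_sub (hsol : NesterovSol n f x X) (hf : Differentiable ℝ f) {a b : ℝ}
    (ha : 0 < a) (hab : a ≤ b) (hmono : MonotoneOn (fun v => ‖deriv X v‖ ^ 2) (Icc a b)) :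
    3 * ‖deriv X a‖ ^ 2 * Real.log (b / a) ≤ nesterovEnergy f X a - nesterovEnergy f X b := by
  have hderiv : ∀ u ∈ Icc a b,
      HasDerivAt (fun v => nesterovEnergy f X v + 3 * ‖deriv X a‖ ^ 2 * Real.log v)
        (-(3 / u) * ‖deriv X u‖ ^ 2 + 3 * ‖deriv X a‖ ^ 2 * u⁻¹) u := fun u hu =>
    (hsol.hasDerivAt_energy hf (ha.trans_le hu.1)).add
      ((Real.hasDerivAt_log (ha.trans_le hu.1).ne').const_mul _)
  have hanti := antitoneOn_of_hasDerivWithinAt_nonpos (convex_Icc a b)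
    (fun u hu => (hderiv u hu).continuousAt.continuousWithinAt)
    (fun u hu => (hderiv u (interior_subset hu)).hasDerivWithinAt) fun u hu => by
      rw [interior_Icc] at hu
      have hu0 : 0 < u := ha.trans hu.1
      have := hmono (left_mem_Icc.2 hab) (Ioo_subset_Icc_self hu) hu.1.le
      rw [div_eq_mul_inv]
      nlinarith [inv_pos.2 hu0]
  have := hanti (left_mem_Icc.2 hab) (right_mem_Icc.2 hab) hab
  rw [Real.log_div (ha.trans_le hab).ne' ha.ne']
  linarith

theorem comp_antitoneOn (hsol : NesterovSol n f x X) (hf : Differentiable ℝ f) {T : ℝ}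
    (hinc : ∀ u ∈ Ioo 0 T, 0 < deriv (fun v => ‖deriv X v‖ ^ 2) u) :
    AntitoneOn (fun u => f (X u)) (Icc 0 T) := by
  refine antitoneOn_of_hasDerivWithinAt_nonpos (f' := fun u => ⟪gradient f (X u), deriv X u⟫)
    (convex_Icc 0 T)
    (hf.continuous.comp_continuousOn (hsol.2.1.continuousOn.mono Icc_subset_Ici_self))
    (fun u hu => ?_) fun u hu => ?_ <;> rw [interior_Icc] at hu
  · exact (hsol.hasDerivAt_comp hf hu.1).hasDerivWithinAt
  · have hpos := hinc u hu
    rw [(hsol.hasDerivAt_sq_norm_deriv hu.1).deriv, hsol.deriv_deriv hu.1, inner_sub_right,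
      inner_neg_right, real_inner_smul_right, real_inner_self_eq_norm_sq, real_inner_comm] at hpos
    have : 0 ≤ 3 / u * ‖deriv X u‖ ^ 2 := by have := hu.1; positivity
    linarith

theorem speedRestartTime_eq_zero (hsol : NesterovSol n f x X) (hf : Differentiable ℝ f)
    (hmin : IsMinOn f univ x) : SpeedRestartTime n X = 0 := by
  have hzero : ∀ u ∈ Ioi (0 : ℝ), ‖deriv X u‖ ^ 2 = 0 := fun u hu => by
    have henergy := hsol.energy_le hf (le_of_lt hu)
    have hfx : f x ≤ f (X u) := hmin (mem_univ (X u))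
    rw [nesterovEnergy] at henergy
    nlinarith [sq_nonneg ‖deriv X u‖]
  by_contra hT
  have hT : 0 < SpeedRestartTime n X := (Real.sSup_nonneg fun t ht => ht.1.le).lt_of_ne' hT
  have hu : SpeedRestartTime n X / 2 ∈ Ioo 0 (SpeedRestartTime n X) :=
    ⟨by positivity, by linarith⟩
  have := deriv_sq_norm_deriv_pos_of_lt_speedRestartTime hu
  rw [(Filter.eventuallyEq_of_mem (Ioi_mem_nhds hu.1) hzero).deriv_eq, deriv_const] at this
  exact this.false

theorem sq_norm_deriv_ge (hsol : NesterovSol n f x X) (hL : 0 < L) (hfS : MemS n μ L f)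
    (hmin : IsMinOn f univ xstar) :
    μ * (f x - f xstar) / (50 * L) ≤ ‖deriv X (1 / (2 * √L))‖ ^ 2 := by
  obtain ⟨⟨-, hfc, hlip⟩, hsc⟩ := hfS
  have hPL := (strongConvexOn_iff_convex.2 hsc).mul_sub_le_norm_gradient_sq
    (hfc.differentiable one_ne_zero x) hmin
  have ht := mul_sq_one_div_two_mul_sqrt hL
  have hV := hsol.norm_deriv_ge hL.le hlip (by positivity) ht.le
  calc μ * (f x - f xstar) / (50 * L)
        = 2 * μ * (f x - f xstar) * (L * (1 / (2 * √L)) ^ 2) / 25 / L := by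
        rw [ht]; field_simp; ring
    _ ≤ ‖gradient f x‖ ^ 2 * (L * (1 / (2 * √L)) ^ 2) / 25 / L := by gcongr
    _ = (‖gradient f x‖ * (1 / (2 * √L)) / 5) ^ 2 := by field_simp; ring
    _ ≤ _ := pow_le_pow_left₀ (by positivity) hV 2

theorem exists_deriv_sq_norm_deriv_nonpos (hsol : NesterovSol n f x X) (hL : 0 < L) (hμ : 0 < μ)
    (hfS : MemS n μ L f) (hmin : IsMinOn f univ xstar) (hx : f xstar < f x)
    (hb : Real.exp (17 * (L / μ)) / (2 * √L) < b) :
    ∃ u ∈ Ioo 0 b, deriv (fun v => ‖deriv X v‖ ^ 2) u ≤ 0 := by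
  have hf := hfS.1.2.1.differentiable one_ne_zero
  set t₁ := 1 / (2 * √L)
  have ht₁ : 0 < t₁ := by positivity
  by_contra! hinc
  set B := Real.exp (17 * (L / μ)) / (2 * √L)
  have hB : B = t₁ * Real.exp (17 * (L / μ)) := by ring
  have ht₁B : t₁ ≤ B := by
    rw [hB]; exact le_mul_of_one_le_right ht₁.le (Real.one_le_exp (by positivity))
  have hmono : MonotoneOn (fun v => ‖deriv X v‖ ^ 2) (Icc t₁ B) := by
    refine monotoneOn_of_deriv_nonneg (convex_Icc _ _)
      ((hsol.continuousOn_deriv.norm.pow 2).mono fun u hu => ht₁.le.trans hu.1)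
      (fun u hu => ?_) fun u hu => ?_ <;> rw [interior_Icc] at hu
    · exact (hsol.hasDerivAt_sq_norm_deriv (ht₁.trans hu.1)).differentiableAt.differentiableWithinAt
    · exact (hinc u ⟨ht₁.trans hu.1, hu.2.trans hb⟩).le
  have hlog := hsol.mul_log_le_energy_sub hf ht₁ ht₁B hmono
  have hlogB : Real.log (B / t₁) = 17 * (L / μ) := by
    rw [hB, mul_div_cancel_left₀ _ ht₁.ne', Real.log_exp]
  rw [hlogB] at hlog
  have hE₁ := hsol.energy_le hf ht₁.le
  have hEB : f xstar ≤ nesterovEnergy f X B :=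
    le_add_of_le_of_nonneg (hmin (mem_univ _)) (by positivity)
  have hV : μ * (f x - f xstar) / (50 * L) ≤ ‖deriv X t₁‖ ^ 2 := hsol.sq_norm_deriv_ge hL hfS hmin
  -- the energy would drop by more than `f x - f⋆`
  have hdrop := mul_le_mul_of_nonneg_right hV (by positivity : (0 : ℝ) ≤ 3 * (17 * (L / μ)))
  have : μ * (f x - f xstar) / (50 * L) * (3 * (17 * (L / μ))) = 51 / 50 * (f x - f xstar) := by
    field_simp
    ring
  linarith

theorem speedRestartTime_bounds (hsol : NesterovSol n f x X) (hL : 0 < L) (hμ : 0 < μ)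
    (hfS : MemS n μ L f) (hmin : IsMinOn f univ xstar) (hx : f xstar < f x) :
    SpeedRestartTime n X ∈ Icc (1 / (2 * √L)) (Real.exp (17 * (L / μ)) / (2 * √L)) := by
  refine speedRestartTime_mem_Icc (by positivity) (fun u hu => ?_)
    fun b hb => hsol.exists_deriv_sq_norm_deriv_nonpos hL hμ hfS hmin hx hb
  have hLu : L * u ^ 2 ≤ L * (1 / (2 * √L)) ^ 2 := by have := hu.1.le; gcongr; exact hu.2.le
  exact hsol.deriv_sq_norm_deriv_pos hL.le hfS.1.2.2 (hfS.gradient_ne_zero hμ hmin hx) hu.1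
    (hLu.trans (mul_sq_one_div_two_mul_sqrt hL).le)

theorem comp_speedRestartTime_sub_le (hsol : NesterovSol n f x X) (hL : 0 < L) (hμ : 0 < μ)
    (hfS : MemS n μ L f) (hmin : IsMinOn f univ xstar) (hx : f xstar < f x) :
    f (X (SpeedRestartTime n X)) - f xstar ≤ Real.exp (-(μ / (100 * L))) * (f x - f xstar) := by
  have hf := hfS.1.2.1.differentiable one_ne_zero
  set t₁ := 1 / (2 * √L)
  have ht₁ : 0 < t₁ := by positivity
  have hT := hsol.speedRestartTime_bounds hL hμ hfS hmin hx
  have hdec := hsol.comp_antitoneOn hf (fun _ => deriv_sq_norm_deriv_pos_of_lt_speedRestartTime)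
    ⟨ht₁.le, hT.1⟩ ⟨ht₁.le.trans hT.1, le_rfl⟩ hT.1
  have hE := hsol.energy_le hf ht₁.le
  have hV : μ * (f x - f xstar) / (50 * L) ≤ ‖deriv X t₁‖ ^ 2 := hsol.sq_norm_deriv_ge hL hfS hmin
  have hexp := mul_le_mul_of_nonneg_right (Real.add_one_le_exp (-(μ / (100 * L))))
    (sub_nonneg.2 hx.le)
  rw [nesterovEnergy] at hE
  have : μ * (f x - f xstar) / (50 * L) = 2 * (μ / (100 * L) * (f x - f xstar)) := by ring
  linarith

end NesterovSol

theorem SpeedRestarted.restart_step {n : ℕ} {f : E n → ℝ} {x₀ xstar : E n} {Xsr : ℝ → E n}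
    {τ : ℕ → ℝ} {μ L : ℝ} (hSR : SpeedRestarted n f x₀ Xsr τ) (hL : 0 < L) (hμ : 0 < μ)
    (hfS : MemS n μ L f) (hmin : IsMinOn f univ xstar) (i : ℕ) :
    τ (i + 1) ≤ τ i + Real.exp (17 * (L / μ)) / (2 * √L) ∧
      f (Xsr (τ (i + 1))) - f xstar ≤ Real.exp (-(μ / (100 * L))) * (f (Xsr (τ i)) - f xstar) ∧
      ∀ t ∈ Icc (τ i) (τ (i + 1)), f (Xsr t) ≤ f (Xsr (τ i)) := by
  have hf := hfS.1.2.1.differentiable one_ne_zero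
  obtain ⟨X, hsol, hτ, hXsr⟩ := hSR.2.2.2.2 i
  have hx : f xstar < f (Xsr (τ i)) := by
    refine (hmin (mem_univ _)).lt_of_ne fun heq => ?_
    have hT := hsol.speedRestartTime_eq_zero hf fun y _ => heq ▸ hmin (mem_univ y)
    have := hSR.2.2.1 (Nat.lt_succ_self i)
    rw [hτ, hT, add_zero] at this
    exact this.false
  have hT := hsol.speedRestartTime_bounds hL hμ hfS hmin hx
  have hXT : Xsr (τ (i + 1)) = X (SpeedRestartTime n X) := by
    rw [hτ, hXsr _ ((by positivity : (0 : ℝ) ≤ 1 / (2 * √L)).trans hT.1) (by rw [hτ]; simp)]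
  refine ⟨by rw [hτ]; gcongr; exact hT.2, ?_, fun t ht => ?_⟩
  · rw [hXT]
    exact hsol.comp_speedRestartTime_sub_le hL hμ hfS hmin hx
  · rw [← add_sub_cancel (τ i) t, hXsr _ (by linarith [ht.1]) (by linarith [ht.2])]
    exact hsol.comp_le hf (by linarith [ht.1])

theorem exists_mem_Ico_of_tendsto_atTop {τ : ℕ → ℝ} (hτ : Tendsto τ atTop atTop) {t : ℝ}
    (ht : τ 0 ≤ t) : ∃ i, t ∈ Ico (τ i) (τ (i + 1)) := by
  classical
  have hex : ∃ N, t < τ N := (hτ.eventually_gt_atTop t).exists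
  obtain ⟨i, hi⟩ := Nat.exists_eq_add_one_of_ne_zero fun h0 : Nat.find hex = 0 =>
    ht.not_gt (h0 ▸ Nat.find_spec hex)
  exact ⟨i, not_lt.1 (Nat.find_min hex (hi ▸ Nat.lt_succ_self i)), hi ▸ Nat.find_spec hex⟩

theorem le_of_restart_decay {g : ℝ → ℝ} {τ : ℕ → ℝ} {T β : ℝ} (hT : 0 < T) (hβ : 0 ≤ β)
    (hτ0 : τ 0 = 0) (hτ : Tendsto τ atTop atTop) (hstep : ∀ i, τ (i + 1) ≤ τ i + T)
    (hdecay : ∀ i, g (τ (i + 1)) ≤ Real.exp (-β) * g (τ i))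
    (hbetween : ∀ i, ∀ t ∈ Ico (τ i) (τ (i + 1)), g t ≤ g (τ i)) (hg0 : 0 ≤ g 0) {t : ℝ}
    (ht : 0 ≤ t) : g t ≤ Real.exp β * g 0 * Real.exp (-β * t / T) := by
  have hτT : ∀ i : ℕ, τ i ≤ i * T := by
    intro i
    induction i with
    | zero => simp [hτ0]
    | succ i ih => push_cast; linarith [hstep i]
  have hgτ : ∀ i : ℕ, g (τ i) ≤ Real.exp (-β * i) * g 0 := by
    intro i
    induction i with
    | zero => simp [hτ0]
    | succ i ih =>
      calc g (τ (i + 1)) ≤ Real.exp (-β) * (Real.exp (-β * i) * g 0) :=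
            (hdecay i).trans (by gcongr)
        _ = Real.exp (-β * ↑(i + 1)) * g 0 := by
            rw [← mul_assoc, ← Real.exp_add]; push_cast; ring_nf
  obtain ⟨i, hi⟩ := exists_mem_Ico_of_tendsto_atTop hτ (hτ0 ▸ ht)
  have hti : t / T ≤ i + 1 := by
    rw [div_le_iff₀ hT]
    exact_mod_cast hi.2.le.trans (hτT (i + 1))
  calc g t ≤ Real.exp (-β * i) * g 0 := (hbetween i t hi).trans (hgτ i)
    _ ≤ Real.exp (β + -β * t / T) * g 0 := by
        gcongr
        rw [mul_div_assoc]
        nlinarith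
    _ = Real.exp β * g 0 * Real.exp (-β * t / T) := by rw [Real.exp_add]; ring

/-- **Theorem 10 (linear convergence of speed restarting).** For every condition number
`κ ≥ 1` there are constants `c₁, c₂ > 0` depending only on `κ` such that for every
`f ∈ S_{L/κ, L}`, the speed-restarted trajectory satisfies
`f(X^{sr}(t)) - f⋆ ≤ (c₁L‖x₀-x⋆‖²/2) e^{-c₂ t √L}` for all `t ≥ 0`. -/
theorem speed_restart_linear_convergence (κ : ℝ) (hκ : 1 ≤ κ) :
    ∃ c1 > (0:ℝ), ∃ c2 > (0:ℝ), ∀ (n : ℕ) (L : ℝ), 0 < L →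
      ∀ f : E n → ℝ, MemS n (L / κ) L f →
      ∀ xstar : E n, IsMinOn f Set.univ xstar →
      ∀ (x0 : E n) (Xsr : ℝ → E n) (τ : ℕ → ℝ), SpeedRestarted n f x0 Xsr τ →
      ∀ t : ℝ, 0 ≤ t →
        f (Xsr t) - f xstar ≤
          c1 * L * ‖x0 - xstar‖ ^ 2 / 2 * Real.exp (-c2 * t * Real.sqrt L) := by
  have hκ0 : 0 < κ := one_pos.trans_le hκ
  refine ⟨Real.exp (1 / (100 * κ)), Real.exp_pos _, Real.exp (-(17 * κ)) / (50 * κ),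
    by positivity, fun n L hL f hfS xstar hmin x0 Xsr τ hSR t ht => ?_⟩
  have hstep := hSR.restart_step hL (by positivity) hfS hmin
  have hLμ : L / (L / κ) = κ := by field_simp
  have hβ : L / κ / (100 * L) = 1 / (100 * κ) := by field_simp
  simp only [hLμ, hβ] at hstep
  have hdecay := le_of_restart_decay (g := fun t => f (Xsr t) - f xstar) (by positivity)
    (by positivity) hSR.1 hSR.2.2.2.1 (fun i => (hstep i).1) (fun i => (hstep i).2.1)
    (fun i t ht => by simpa using (hstep i).2.2 t (Ico_subset_Icc_self ht))
    (by simpa using hmin (mem_univ (Xsr 0))) ht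
  have hgap := hmin.sub_le_of_lipschitz_gradient (hfS.1.2.1.differentiable one_ne_zero)
    hfS.1.2.2 x0
  have hexp : -(1 / (100 * κ)) * t / (Real.exp (17 * κ) / (2 * √L)) =
      -(Real.exp (-(17 * κ)) / (50 * κ)) * t * √L := by
    rw [Real.exp_neg]; field_simp; ring
  simp only [hSR.2.1, hexp] at hdecay
  calc _ ≤ _ := hdecay
    _ ≤ Real.exp (1 / (100 * κ)) * (L / 2 * ‖x0 - xstar‖ ^ 2) *
          Real.exp (-(Real.exp (-(17 * κ)) / (50 * κ)) * t * √L) := by gcongr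
    _ = _ := by ring
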